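/- arXiv:1103.0851 — 2 statements merged into one kernel-verified Lean document; each statement's English description precedes it below -/
import Mathlib

section
/- Let W be an integer and let Q be a nonempty finite set of integers such that 2q < W for every q ∈ Q, and set p = W − max(Q). Then the set of critical integers { m ∈ ℤ : for every q ∈ Q, Γ(m − q) ≠ 0 and Γ(W + 1 − m − q) ≠ 0 } (Γ denoting the complex Gamma function) is exactly the interval of integers { m ∈ ℤ : W + 1 − p ≤ m ≤ p }; this set has exactly 2p − W elements, and it is stable under the symmetry m ↦ W + 1 − m, so it is centered at (W + 1)/2. -/
lemma gamma_int_ne_zero_iff (k : ℤ) : Complex.Gamma (k : ℂ) ≠ 0 ↔ 1 ≤ k := by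
  rw [Ne, Complex.Gamma_eq_zero_iff]
  constructor
  · intro h
    by_contra hk
    refine h ⟨(-k).toNat, ?_⟩
    have h2 : ((-k).toNat : ℤ) = -k := Int.toNat_of_nonneg (by omega)
    rw [← Int.cast_natCast, h2]; push_cast; ring
  · rintro h ⟨n, hn⟩
    have : k = -(n : ℤ) := by exact_mod_cast hn
    omega

/-- Let `W` be an integer and `Q` a nonempty finite set of integers with
`2q < W` for every `q ∈ Q`; set `p = W − max(Q)`. Then the set of critical integers
`{ m : ∀ q ∈ Q, Γ(m − q) ≠ 0 ∧ Γ(W + 1 − m − q) ≠ 0 }` (with `Γ` the complex Gamma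
function) is exactly `{ m : W + 1 − p ≤ m ≤ p }`; this set has exactly `2p − W`
elements, and it is stable under the symmetry `m ↦ W + 1 − m` (so it is centered at
`(W + 1)/2`). -/
theorem stmt_6 (W : ℤ) (Q : Finset ℤ) (hQ : Q.Nonempty) (hlt : ∀ q ∈ Q, 2 * q < W)
    (p : ℤ) (hp : p = W - Q.max' hQ) :
    (∀ m : ℤ,
      (∀ q ∈ Q, Complex.Gamma ((m : ℂ) - (q : ℂ)) ≠ 0 ∧
        Complex.Gamma ((W : ℂ) + 1 - (m : ℂ) - (q : ℂ)) ≠ 0)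
      ↔ (W + 1 - p ≤ m ∧ m ≤ p))
    ∧ (Finset.Icc (W + 1 - p) p).card = (2 * p - W).toNat
    ∧ (∀ m : ℤ, (W + 1 - p ≤ m ∧ m ≤ p) ↔ (W + 1 - p ≤ W + 1 - m ∧ W + 1 - m ≤ p)) := by
  have hmax := Q.max'_mem hQ
  refine ⟨fun m => ?_, ?_, fun m => by omega⟩
  · constructor
    · intro h
      obtain ⟨h1, h2⟩ := h _ hmax
      rw [show (m : ℂ) - (Q.max' hQ : ℂ) = ((m - Q.max' hQ : ℤ) : ℂ) by push_cast; ring,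
        gamma_int_ne_zero_iff] at h1
      rw [show (W : ℂ) + 1 - (m : ℂ) - (Q.max' hQ : ℂ) = ((W + 1 - m - Q.max' hQ : ℤ) : ℂ) by
        push_cast; ring, gamma_int_ne_zero_iff] at h2
      omega
    · intro hm q hq
      have hle := Q.le_max' q hq
      constructor
      · rw [show (m : ℂ) - (q : ℂ) = ((m - q : ℤ) : ℂ) by push_cast; ring,
          gamma_int_ne_zero_iff]
        omega
      · rw [show (W : ℂ) + 1 - (m : ℂ) - (q : ℂ) = ((W + 1 - m - q : ℤ) : ℂ) by push_cast; ring,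
          gamma_int_ne_zero_iff]
        omega
  · rw [Int.card_Icc]
    congr 1
    omega
end

section
/- Let n ≥ 2 be even and N = n + 1. Let λ = (λ_1, …, λ_n) be a regular essentially self-dual highest weight for GL_n, let d′ ∈ ℤ, and set μ = (λ_1, …, λ_n, d′) ∈ ℤ^N, w = w(λ), and p = (w + a_{n/2}(λ))/2. Then there exist a dominant weight μ̃ ∈ ℤ^N and a permutation σ ∈ S_N with ℓ(σ) = n/2 such that σ·μ̃ = μ, if and only if w − 2p + 2 − N ≤ λ_1 + λ_n − 2d′ ≤ 2p − w − 2 − N. -/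
/-!
Write `v = μ + ρ̃`. Since `ρ̃` drops by one at each step, an integral `μ̃` is dominant iff `μ̃ + ρ̃`
is strictly decreasing, and `σ·μ̃ = μ` says that `v` is a rearrangement of `μ̃ + ρ̃`. Hence a
solution exists iff the entries of `v` are distinct, `σ` being the sorting permutation, whose
length is the number of pairs `i < j` with `v i < v j`. The first `n` entries of `v` decrease
strictly, so these pairs all end at the last entry `d′ − n/2`, and there are `n/2` of them iff
that entry lies strictly between `λ_{n/2+1}` and `λ_{n/2} + 1`. Self-duality gives
`λ_1 + λ_n = λ_{n/2} + λ_{n/2+1}`, which turns this into the stated inequalities.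
-/

/-- The length (number of inversions) of a permutation of `Fin N`:
`ℓ(σ) = #{ (i,j) : i < j and σ(i) > σ(j) }`. -/
def permLength {N : ℕ} (σ : Equiv.Perm (Fin N)) : ℕ :=
  (Finset.univ.filter (fun q : Fin N × Fin N => q.1 < q.2 ∧ σ q.2 < σ q.1)).card

/-- The half-sum of positive roots of `GL_N`, `ρ̃_i = (N + 1 − 2i)/2` in 1-based
indexing, i.e. `ρ̃_i = (N − 1)/2 − i` in 0-based indexing (`N` odd). -/
def rhoGL (N : ℕ) : Fin N → ℤ := fun i => ((N : ℤ) - 1) / 2 - (i : ℤ)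

open Finset Function

section Sorting

variable {α : Type*} [LinearOrder α]

def increasingPairCount {N : ℕ} (v : Fin N → α) : ℕ :=
  #{q : Fin N × Fin N | q.1 < q.2 ∧ v q.1 < v q.2}

theorem permLength_inv {N : ℕ} (σ : Equiv.Perm (Fin N)) : permLength σ⁻¹ = permLength σ := by
  unfold permLength
  refine card_nbij' (fun q => (σ⁻¹ q.2, σ⁻¹ q.1)) (fun q => (σ q.2, σ q.1)) ?_ ?_ ?_ ?_
  all_goals intro q hq; simp_all

theorem permLength_eq_increasingPairCount {N : ℕ} {u : Fin N → α} (hu : StrictAnti u)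
    (σ : Equiv.Perm (Fin N)) : permLength σ = increasingPairCount (u ∘ ⇑σ⁻¹) := by
  rw [← permLength_inv, permLength, increasingPairCount]
  refine congrArg card (filter_congr fun q _ => and_congr_right fun _ => ?_)
  exact hu.lt_iff_gt.symm

end Sorting

section DotAction

theorem rhoGL_strictAnti (N : ℕ) : StrictAnti (rhoGL N) := fun i j h => by
  simp only [rhoGL]
  linarith [show (i : ℤ) < j from mod_cast h]

theorem antitone_sub_rhoGL_of_strictAnti {N : ℕ} {u : Fin N → ℤ} (hu : StrictAnti u) :
    Antitone (u - rhoGL N) := by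
  rcases N with _ | N
  · exact fun i => i.elim0
  rw [Fin.antitone_iff_succ_le]
  intro i
  have := hu i.castSucc_lt_succ
  simp only [Pi.sub_apply, rhoGL, Fin.val_succ, Fin.val_castSucc]
  push_cast
  linarith

theorem exists_dominant_dot_eq_iff {N : ℕ} (μ : Fin N → ℤ) (L : ℕ) :
    (∃ (μ' : Fin N → ℤ) (σ : Equiv.Perm (Fin N)), Antitone μ' ∧ permLength σ = L ∧
      ∀ i, μ' (σ⁻¹ i) + rhoGL N (σ⁻¹ i) - rhoGL N i = μ i) ↔
    Injective (μ + rhoGL N) ∧ increasingPairCount (μ + rhoGL N) = L := by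
  constructor
  · rintro ⟨μ', σ, hdom, rfl, hdot⟩
    have hu : StrictAnti (μ' + rhoGL N) := hdom.add_strictAnti (rhoGL_strictAnti N)
    have hv : μ + rhoGL N = (μ' + rhoGL N) ∘ ⇑σ⁻¹ := funext fun i => by
      simp [← hdot i]
    rw [hv]
    exact ⟨hu.injective.comp σ⁻¹.injective, (permLength_eq_increasingPairCount hu σ).symm⟩
  · rintro ⟨hinj, rfl⟩
    set v := μ + rhoGL N
    set σ := Tuple.sort (OrderDual.toDual ∘ v)
    have hsorted : Antitone (v ∘ σ) :=
      monotone_toDual_comp_iff.mp (Tuple.monotone_sort (OrderDual.toDual ∘ v))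
    have hu : StrictAnti (v ∘ σ) := hsorted.strictAnti_of_injective (hinj.comp σ.injective)
    refine ⟨v ∘ σ - rhoGL N, σ, antitone_sub_rhoGL_of_strictAnti hu, ?_, fun i => by simp [v]⟩
    rw [permLength_eq_increasingPairCount hu]
    congr 1
    ext i
    simp

end DotAction

section InsertedEntry

variable {α : Type*} [LinearOrder α] {n : ℕ}

theorem card_filter_lt_eq_sub_iff {a : Fin n → α} (ha : StrictAnti a) (x : α) {i j : Fin n}
    (hij : (j : ℕ) = i + 1) : #{l | a l < x} = n - j ↔ a j < x ∧ x ≤ a i := by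
  constructor
  · intro hcard
    by_contra hx
    rcases le_or_gt x (a j) with hxj | hix
    · have hsub : ({l | a l < x} : Finset (Fin n)) ⊆ Ioi j := fun l hl => by
        simp only [mem_filter, mem_univ, true_and, mem_Ioi] at hl ⊢
        by_contra! hlj
        exact (hl.trans_le hxj).not_ge (ha.antitone hlj)
      have := card_le_card hsub
      rw [Fin.card_Ioi] at this
      omega
    · have hsub : Ici i ⊆ ({l | a l < x} : Finset (Fin n)) := fun l hl => by
        simp only [mem_filter, mem_univ, true_and, mem_Ici] at hl ⊢
        exact (ha.antitone hl).trans_lt (not_le.mp fun h => hx ⟨hix, h⟩)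
      have := card_le_card hsub
      rw [Fin.card_Ici] at this
      omega
  · rintro ⟨hjx, hxi⟩
    have : ({l | a l < x} : Finset (Fin n)) = Ici j := by
      ext l
      simp only [mem_filter, mem_univ, true_and, mem_Ici]
      constructor
      · intro hl
        by_contra! hlj
        have hli : l ≤ i := Fin.le_def.mpr (by have := Fin.lt_def.mp hlj; omega)
        exact hl.not_ge (hxi.trans (ha.antitone hli))
      · exact fun hl => (ha.antitone hl).trans_lt hjx
    rw [this, Fin.card_Ici]

variable {v : Fin (n + 1) → α}

theorem increasingPairCount_eq_card_lt_last (hv : StrictAnti (v ∘ Fin.castSucc)) :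
    increasingPairCount v = #{i : Fin n | v i.castSucc < v (Fin.last n)} := by
  have last_of_mem : ∀ q : Fin (n + 1) × Fin (n + 1), q.1 < q.2 → v q.1 < v q.2 →
      q.2 = Fin.last n := by
    rintro ⟨i, j⟩ hij hv_ij
    by_contra hj
    obtain ⟨j, rfl⟩ := Fin.exists_castSucc_eq.mpr hj
    obtain ⟨i, rfl⟩ := Fin.exists_castSucc_eq.mpr (hij.trans (Fin.castSucc_lt_last j)).ne
    exact hv_ij.not_gt (hv (Fin.castSucc_lt_castSucc_iff.mp hij))
  symm
  refine card_bij (fun i _ => (i.castSucc, Fin.last n)) ?_ ?_ ?_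
  · intro i hi
    simp only [mem_filter, mem_univ, true_and] at hi ⊢
    exact ⟨Fin.castSucc_lt_last i, hi⟩
  · intro i _ j _ h
    exact Fin.castSucc_injective n (Prod.ext_iff.mp h).1
  · rintro ⟨i, j⟩ hq
    simp only [mem_filter, mem_univ, true_and] at hq
    obtain rfl := last_of_mem (i, j) hq.1 hq.2
    obtain ⟨i, rfl⟩ := Fin.exists_castSucc_eq.mpr hq.1.ne
    exact ⟨i, by simpa using hq.2, rfl⟩

theorem injective_of_ne_last (hv : StrictAnti (v ∘ Fin.castSucc))
    (hlast : ∀ i : Fin n, v i.castSucc ≠ v (Fin.last n)) : Injective v := by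
  intro i j hij
  induction i using Fin.lastCases with
  | last =>
    induction j using Fin.lastCases with
    | last => rfl
    | cast j => exact absurd hij.symm (hlast j)
  | cast i =>
    induction j using Fin.lastCases with
    | last => exact absurd hij (hlast i)
    | cast j => exact congrArg _ (hv.injective hij)

theorem injective_and_increasingPairCount_eq_iff (hv : StrictAnti (v ∘ Fin.castSucc))
    {i j : Fin n} (hij : (j : ℕ) = i + 1) :
    Injective v ∧ increasingPairCount v = n - j ↔
      v j.castSucc < v (Fin.last n) ∧ v (Fin.last n) < v i.castSucc := by
  have hcard := card_filter_lt_eq_sub_iff hv (v (Fin.last n)) hij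
  simp only [comp_apply] at hcard
  rw [increasingPairCount_eq_card_lt_last hv, hcard]
  constructor
  · rintro ⟨hinj, hjx, hxi⟩
    exact ⟨hjx, hxi.lt_of_ne (hinj.ne (Fin.castSucc_lt_last i).ne')⟩
  · rintro ⟨hjx, hxi⟩
    refine ⟨injective_of_ne_last hv fun k => ?_, hjx, hxi.le⟩
    rcases le_or_gt k i with hki | hik
    · exact (hxi.trans_le (hv.antitone hki)).ne'
    · have hjk : j ≤ k := Fin.le_def.mpr (by have := Fin.lt_def.mp hik; omega)
      exact ((hv.antitone hjk).trans_lt hjx).ne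

end InsertedEntry

theorem add_eq_add_of_gaps_symm {f : ℕ → ℤ} {n : ℕ}
    (h : ∀ i, 1 ≤ i → i ≤ n - 1 → f i - f (i + 1) = f (n - i) - f (n - i + 1))
    {k : ℕ} (hk : 1 ≤ k) (hkn : k ≤ n) : f k + f (n + 1 - k) = f 1 + f n := by
  induction k, hk using Nat.le_induction with
  | base => simp
  | succ k hk ih =>
    have hgap := h k hk (by omega)
    rw [show n + 1 - (k + 1) = n - k by omega]
    rw [show n + 1 - k = n - k + 1 by omega] at ih
    linarith [ih (by omega)]

theorem injective_and_increasingPairCount_eq_half_iff {m : ℕ} (hm : 1 ≤ m) {lam : ℕ → ℤ}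
    (hlam : AntitoneOn lam (Set.Icc 1 (m + m))) (d' : ℤ) {v : Fin (m + m + 1) → ℤ}
    -- `v = μ + ρ̃` for `μ = (λ_1, …, λ_{2m}, d′)`
    (hv : ∀ i : Fin (m + m + 1), v i = (if (i : ℕ) < m + m then lam (i + 1) else d') + (m - i)) :
    Injective v ∧ increasingPairCount v = m ↔ lam (m + 1) + m < d' ∧ d' ≤ lam m + m := by
  have hcast : ∀ k : Fin (m + m), v k.castSucc = lam (k + 1) + (m - k) := fun k => by
    simp [hv, k.isLt]
  have hstrict : StrictAnti (v ∘ Fin.castSucc) := fun k l hkl => by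
    have hkl' : (k : ℤ) < l := mod_cast hkl
    have hlam_kl : lam (l + 1) ≤ lam (k + 1) :=
      hlam ⟨by omega, by omega⟩ ⟨by omega, by omega⟩ (by have := Fin.lt_def.mp hkl; omega)
    simp only [comp_apply, hcast]
    linarith
  have key := injective_and_increasingPairCount_eq_iff hstrict
    (i := ⟨m - 1, by omega⟩) (j := ⟨m, by omega⟩) (by simp; omega)
  rw [show m + m - m = m by omega] at key
  rw [key, hcast, hcast, hv]
  simp only [Fin.val_last, lt_irrefl, if_false, Nat.sub_add_cancel hm, Nat.cast_sub hm]
  push_cast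
  constructor <;> rintro ⟨h₁, h₂⟩ <;> constructor <;> linarith

theorem stmt_10_general (n : ℕ) (hn : 2 ≤ n) (hne : Even n) (N : ℕ) (hN : N = n + 1)
    (lam : ℕ → ℤ) (d' : ℤ)
    (hmono : ∀ i, 1 ≤ i → i < n → lam (i + 1) ≤ lam i)
    (hsd : ∀ i, 1 ≤ i → i ≤ n - 1 →
      lam i - lam (i + 1) + 1 = lam (n - i) - lam (n - i + 1) + 1)
    (mu : Fin N → ℤ)
    (hmu : ∀ i : Fin N, mu i = if (i : ℕ) < n then lam ((i : ℕ) + 1) else d')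
    (w : ℤ) (hw : w = lam 1 - lam n + (n : ℤ) - 1)
    (p : ℤ) (hp : 2 * p = w + (lam (n / 2) - lam (n / 2 + 1) + 1)) :
    (∃ (muTilde : Fin N → ℤ) (σ : Equiv.Perm (Fin N)),
      (∀ i j : Fin N, i ≤ j → muTilde j ≤ muTilde i)
      ∧ permLength σ = n / 2
      ∧ (∀ i : Fin N, (muTilde (σ⁻¹ i) + rhoGL N (σ⁻¹ i)) - rhoGL N i = mu i))
    ↔ (w - 2 * p + 2 - (N : ℤ) ≤ lam 1 + lam n - 2 * d'
        ∧ lam 1 + lam n - 2 * d' ≤ 2 * p - w - 2 - (N : ℤ)) := by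
  obtain ⟨m, rfl⟩ := hne
  subst hN
  have hm : 1 ≤ m := by omega
  have hhalf : (m + m) / 2 = m := by omega
  have hanti : AntitoneOn lam (Set.Icc 1 (m + m)) :=
    antitoneOn_of_succ_le Set.ordConnected_Icc fun i _ hi hsi =>
      hmono i hi.1 (by simp only [Set.mem_Icc, Order.succ_eq_add_one] at hsi; omega)
  have hcenter := add_eq_add_of_gaps_symm (f := lam) (n := m + m)
    (fun i h₁ h₂ => by linarith [hsd i h₁ h₂]) hm (by omega)
  rw [show m + m + 1 - m = m + 1 by omega] at hcenter
  rw [hhalf] at hp ⊢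
  refine (exists_dominant_dot_eq_iff mu m).trans ?_
  rw [injective_and_increasingPairCount_eq_half_iff hm hanti d' fun i => by
    rw [Pi.add_apply, hmu, rhoGL]; push_cast; omega]
  push_cast at hw ⊢
  constructor <;> rintro ⟨h₁, h₂⟩ <;> constructor <;> linarith

/-- Combinatorial Lemma for `n′ = 1`: Let `n ≥ 2` be even, `N = n + 1`,
let `λ = (λ_1, …, λ_n)` be a regular essentially self-dual highest weight for `GL_n`,
`d′ ∈ ℤ`, `μ = (λ_1, …, λ_n, d′) ∈ ℤ^N`, `w = w(λ) = λ_1 − λ_n + n − 1` and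
`p = (w + a_{n/2}(λ))/2`. Then there exist a dominant (nonincreasing) weight
`μ̃ ∈ ℤ^N` and a permutation `σ ∈ S_N` with `ℓ(σ) = n/2` such that the Kostant dot
action gives `σ·μ̃ = σ(μ̃ + ρ̃) − ρ̃ = μ`, if and only if
`w − 2p + 2 − N ≤ λ_1 + λ_n − 2d′ ≤ 2p − w − 2 − N`. -/
theorem stmt_10 (n : ℕ) (hn : 2 ≤ n) (hne : Even n) (N : ℕ) (hN : N = n + 1)
    (lam : ℕ → ℤ) (d' : ℤ)
    (hmono : ∀ i, 1 ≤ i → i < n → lam (i + 1) ≤ lam i)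
    (hreg : ∀ i, 1 ≤ i → i ≤ n - 1 → 2 ≤ lam i - lam (i + 1) + 1)
    (hsd : ∀ i, 1 ≤ i → i ≤ n - 1 →
      lam i - lam (i + 1) + 1 = lam (n - i) - lam (n - i + 1) + 1)
    (mu : Fin N → ℤ)
    (hmu : ∀ i : Fin N, mu i = if (i : ℕ) < n then lam ((i : ℕ) + 1) else d')
    (w : ℤ) (hw : w = lam 1 - lam n + (n : ℤ) - 1)
    (p : ℤ) (hp : 2 * p = w + (lam (n / 2) - lam (n / 2 + 1) + 1)) :
    (∃ (muTilde : Fin N → ℤ) (σ : Equiv.Perm (Fin N)),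
      (∀ i j : Fin N, i ≤ j → muTilde j ≤ muTilde i)
      ∧ permLength σ = n / 2
      ∧ (∀ i : Fin N, (muTilde (σ⁻¹ i) + rhoGL N (σ⁻¹ i)) - rhoGL N i = mu i))
    ↔ (w - 2 * p + 2 - (N : ℤ) ≤ lam 1 + lam n - 2 * d'
        ∧ lam 1 + lam n - 2 * d' ≤ 2 * p - w - 2 - (N : ℤ)) :=
  stmt_10_general n hn hne N hN lam d' hmono hsd mu hmu w hw p hp
end
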